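/- For the laziest minimal random walk with parameter p ∈ (0,1), the factorial moments satisfy the recursion E[(H_{n+1})_k] = ((n+kp)/n) · E[(H_n)_k] + (k(k-1)p/n) · E[(H_n)_{k-1}] for all n ≥ 1 and k ≥ 1. -/

import Mathlib

/-!
Since `X (n+1) ∈ {0, 1}`, Pascal's rule for falling factorials gives
`(H_{n+1})_k = (H_n)_k + k (H_n)_{k-1} X_{n+1}`. Conditioning on `ℱ n` replaces `X_{n+1}` by
`p H_n / n`, and `H_n (H_n)_{k-1} = (H_n)_k + (k-1) (H_n)_{k-1}` turns the result back into
factorial moments of `H_n`.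
-/

open MeasureTheory ProbabilityTheory Filter Real

def lazyH {Ω : Type*} (X : ℕ → Ω → ℕ) (n : ℕ) (ω : Ω) : ℕ :=
  ∑ i ∈ Finset.Icc 1 n, X i ω

theorem Nat.succ_descFactorial_succ_eq_add (m j : ℕ) :
    (m + 1).descFactorial (j + 1) = m.descFactorial (j + 1) + (j + 1) * m.descFactorial j := by
  rw [Nat.succ_descFactorial_succ, Nat.descFactorial_succ]
  rcases le_or_gt j m with h | h
  · rw [← add_mul]
    congr 1
    omega
  · simp [Nat.descFactorial_eq_zero_iff_lt.2 h]

theorem Nat.self_mul_descFactorial (m j : ℕ) :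
    m * m.descFactorial j = m.descFactorial (j + 1) + j * m.descFactorial j := by
  rw [Nat.descFactorial_succ]
  rcases le_or_gt j m with h | h
  · rw [← add_mul, Nat.sub_add_cancel h]
  · simp [Nat.descFactorial_eq_zero_iff_lt.2 h]

theorem Nat.descFactorial_add_of_le_one {x : ℕ} (hx : x ≤ 1) (m j : ℕ) :
    (m + x).descFactorial (j + 1) = m.descFactorial (j + 1) + (j + 1) * m.descFactorial j * x := by
  interval_cases x
  · simp
  · simpa using Nat.succ_descFactorial_succ_eq_add m j

theorem MeasureTheory.integral_mul_eq_integral_mul_condExp {Ω : Type*} {m m0 : MeasurableSpace Ω}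
    {μ : Measure Ω} [IsFiniteMeasure μ] (hm : m ≤ m0) {f g : Ω → ℝ} (hf : StronglyMeasurable[m] f)
    (hg : Integrable g μ) (c : ℝ) (hf_bound : ∀ᵐ ω ∂μ, ‖f ω‖ ≤ c) :
    ∫ ω, f ω * g ω ∂μ = ∫ ω, f ω * μ[g | m] ω ∂μ :=
  (integral_condExp hm).symm.trans
    (integral_congr_ae (condExp_stronglyMeasurable_mul_of_bound hm hf hg c hf_bound))

section LazyWalk

variable {Ω : Type*} {X : ℕ → Ω → ℕ}

theorem lazyH_succ (n : ℕ) (ω : Ω) : lazyH X (n + 1) ω = lazyH X n ω + X (n + 1) ω :=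
  Finset.sum_Icc_succ_top (Nat.le_add_left 1 n) _

theorem lazyH_le (hXval : ∀ n ω, X n ω ≤ 1) (n : ℕ) (ω : Ω) : lazyH X n ω ≤ n :=
  (Finset.sum_le_sum fun i _ => hXval i ω).trans_eq (by simp)

theorem measurable_lazyH {m0 : MeasurableSpace Ω} (ℱ : Filtration ℕ m0)
    (hadp : ∀ n, Measurable[ℱ n] (X n)) (n : ℕ) : Measurable[ℱ n] (lazyH X n) :=
  Finset.measurable_sum _ fun i hi => (hadp i).mono (ℱ.mono (Finset.mem_Icc.1 hi).2) le_rfl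

theorem measurable_descFactorial_lazyH {m0 : MeasurableSpace Ω} (ℱ : Filtration ℕ m0)
    (hadp : ∀ n, Measurable[ℱ n] (X n)) (n j : ℕ) :
    Measurable[ℱ n] fun ω => ((lazyH X n ω).descFactorial j : ℝ) :=
  measurable_from_top.comp (g := fun m : ℕ => (m.descFactorial j : ℝ)) (measurable_lazyH ℱ hadp n)

theorem norm_descFactorial_lazyH_le (hXval : ∀ n ω, X n ω ≤ 1) (n j : ℕ) (ω : Ω) :
    ‖((lazyH X n ω).descFactorial j : ℝ)‖ ≤ n.descFactorial j := by
  rw [Real.norm_natCast]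
  exact_mod_cast Nat.descFactorial_le j (lazyH_le hXval n ω)

variable {m0 : MeasurableSpace Ω} (μ : Measure Ω) [IsFiniteMeasure μ] (ℱ : Filtration ℕ m0)
  (hXval : ∀ n ω, X n ω ≤ 1) (hadp : ∀ n, Measurable[ℱ n] (X n))
include hXval hadp

theorem integrable_descFactorial_lazyH (n j : ℕ) :
    Integrable (fun ω => ((lazyH X n ω).descFactorial j : ℝ)) μ :=
  .of_bound
    ((measurable_descFactorial_lazyH ℱ hadp n j).mono (ℱ.le n) le_rfl).aestronglyMeasurable _
    (.of_forall (norm_descFactorial_lazyH_le hXval n j))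

theorem integrable_X (n : ℕ) : Integrable (fun ω => (X n ω : ℝ)) μ :=
  .of_bound (measurable_from_top.comp ((hadp n).mono (ℱ.le n) le_rfl)).aestronglyMeasurable 1
    (.of_forall fun ω => by simpa using hXval n ω)

theorem integral_descFactorial_lazyH_succ (n j : ℕ) :
    ∫ ω, ((lazyH X (n + 1) ω).descFactorial (j + 1) : ℝ) ∂μ =
      ∫ ω, ((lazyH X n ω).descFactorial (j + 1) : ℝ) ∂μ
        + (j + 1) * ∫ ω, ((lazyH X n ω).descFactorial j : ℝ) * X (n + 1) ω ∂μ := by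
  have hpascal : ∀ ω, ((lazyH X (n + 1) ω).descFactorial (j + 1) : ℝ) =
      (lazyH X n ω).descFactorial (j + 1)
        + (j + 1) * (((lazyH X n ω).descFactorial j : ℝ) * X (n + 1) ω) := by
    intro ω
    rw [lazyH_succ, Nat.descFactorial_add_of_le_one (hXval (n + 1) ω)]
    push_cast
    ring
  have hprod : Integrable
      (fun ω => ((lazyH X n ω).descFactorial j : ℝ) * X (n + 1) ω) μ :=
    (integrable_X μ ℱ hXval hadp (n + 1)).bdd_mul
      (integrable_descFactorial_lazyH μ ℱ hXval hadp n j).aestronglyMeasurable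
      (.of_forall (norm_descFactorial_lazyH_le hXval n j))
  simp_rw [hpascal]
  rw [integral_add (integrable_descFactorial_lazyH μ ℱ hXval hadp n (j + 1)) (hprod.const_mul _),
    integral_const_mul]

theorem integral_descFactorial_lazyH_mul_X_succ (p : ℝ) (n j : ℕ)
    (hcond : μ[(fun ω => (X (n + 1) ω : ℝ)) | ℱ n] =ᵐ[μ] fun ω => p * (lazyH X n ω : ℝ) / n) :
    ∫ ω, ((lazyH X n ω).descFactorial j : ℝ) * X (n + 1) ω ∂μ =
      p / n * (∫ ω, ((lazyH X n ω).descFactorial (j + 1) : ℝ) ∂μ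
        + j * ∫ ω, ((lazyH X n ω).descFactorial j : ℝ) ∂μ) := by
  have hpointwise : ∀ᵐ ω ∂μ,
      ((lazyH X n ω).descFactorial j : ℝ) * μ[fun ω => (X (n + 1) ω : ℝ) | ℱ n] ω
        = p / n * ((lazyH X n ω).descFactorial (j + 1) + j * (lazyH X n ω).descFactorial j) := by
    filter_upwards [hcond] with ω hω
    have h := congrArg (Nat.cast : ℕ → ℝ) (Nat.self_mul_descFactorial (lazyH X n ω) j)
    push_cast at h
    rw [hω, ← h]
    ring
  rw [integral_mul_eq_integral_mul_condExp (ℱ.le n)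
      (measurable_descFactorial_lazyH ℱ hadp n j).stronglyMeasurable
      (integrable_X μ ℱ hXval hadp (n + 1)) _ (.of_forall (norm_descFactorial_lazyH_le hXval n j)),
    integral_congr_ae hpointwise, integral_const_mul,
    integral_add (integrable_descFactorial_lazyH μ ℱ hXval hadp n (j + 1))
      ((integrable_descFactorial_lazyH μ ℱ hXval hadp n j).const_mul _), integral_const_mul]

end LazyWalk

theorem stmt5_general {Ω : Type*} {m0 : MeasurableSpace Ω} (μ : Measure Ω) [IsProbabilityMeasure μ]
    (ℱ : Filtration ℕ m0) (p : ℝ)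
    (X : ℕ → Ω → ℕ)
    (hXval : ∀ n ω, X n ω ≤ 1)
    (hadp : ∀ n, Measurable[ℱ n] (X n))
    (hcond : ∀ n : ℕ, 1 ≤ n →
      μ[(fun ω => (X (n + 1) ω : ℝ)) | ℱ n] =ᵐ[μ]
        fun ω => p * (lazyH X n ω : ℝ) / n) :
    ∀ n : ℕ, 1 ≤ n → ∀ k : ℕ, 1 ≤ k →
      ∫ ω, ((lazyH X (n + 1) ω).descFactorial k : ℝ) ∂μ =
        ((n + k * p) / n) * ∫ ω, ((lazyH X n ω).descFactorial k : ℝ) ∂μ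
          + ((k : ℝ) * ((k : ℝ) - 1) * p / n) * ∫ ω, ((lazyH X n ω).descFactorial (k - 1) : ℝ) ∂μ := by
  intro n hn k hk
  obtain ⟨j, rfl⟩ := Nat.exists_eq_add_of_le' hk
  rw [integral_descFactorial_lazyH_succ μ ℱ hXval hadp,
    integral_descFactorial_lazyH_mul_X_succ μ ℱ hXval hadp p n j (hcond n hn), Nat.add_sub_cancel]
  have hn0 : (n : ℝ) ≠ 0 := by positivity
  push_cast
  field_simp
  ring

theorem stmt5 {Ω : Type*} {m0 : MeasurableSpace Ω} (μ : Measure Ω) [IsProbabilityMeasure μ]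
    (ℱ : Filtration ℕ m0) (p : ℝ) (hp : 0 < p) (hp1 : p < 1)
    (X : ℕ → Ω → ℕ)
    (hXval : ∀ n ω, X n ω ≤ 1)
    (hX1 : ∀ᵐ ω ∂μ, X 1 ω = 1)
    (hadp : ∀ n, Measurable[ℱ n] (X n))
    (hcond : ∀ n : ℕ, 1 ≤ n →
      μ[(fun ω => (X (n + 1) ω : ℝ)) | ℱ n] =ᵐ[μ]
        fun ω => p * (lazyH X n ω : ℝ) / n) :
    ∀ n : ℕ, 1 ≤ n → ∀ k : ℕ, 1 ≤ k →
      ∫ ω, ((lazyH X (n + 1) ω).descFactorial k : ℝ) ∂μ =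
        ((n + k * p) / n) * ∫ ω, ((lazyH X n ω).descFactorial k : ℝ) ∂μ
          + ((k : ℝ) * ((k : ℝ) - 1) * p / n) * ∫ ω, ((lazyH X n ω).descFactorial (k - 1) : ℝ) ∂μ :=
  stmt5_general μ ℱ p X hXval hadp hcond
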